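/- Let L be a finitary first-order language that is relational (no function symbols and no constant symbols) and let φ be an L-sentence. Then the following are equivalent: (i) for every nonempty L-structure A, A ⊨ θ(φ) iff A ⊨ φ (i.e., φ itself expresses θ(φ)); (ii) φ is logically equivalent over nonempty L-structures to a Σ⁰₁ (existential) L-sentence. -/

import Mathlib

/-!
Condition (i) says that `φ` is preserved under embeddings of nonempty structures: an embedding
`M ↪ N` exhibits `M` as a nonempty substructure of `N`, and `M` is a substructure of itself.
So this is the Łoś–Tarski theorem. Existential sentences are preserved under embeddings.
Conversely, let `φ` be preserved and `M ⊨ φ`. Every model of the quantifier-free diagram of `M`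
contains a copy of `M`, hence satisfies `φ`; by compactness a single quantifier-free fact `δ(m̄)`
about `M` already forces `φ`, so `∃ x̄, δ(x̄)` is an existential sentence true in `M` that
implies `φ`. By compactness again `φ` is equivalent to a finite disjunction of such sentences,
and padding their quantifier blocks to a common length makes this disjunction existential.
-/

open FirstOrder Language

universe u v

namespace FirstOrder.Language

variable {L : Language.{u, v}} {α β : Type*} {M : Type*} [L.Structure M] {N : Type*}
  [L.Structure N]

namespace BoundedFormula

theorem isQF_foldr_sup {n : ℕ} {l : List (L.BoundedFormula α n)} (h : ∀ φ ∈ l, φ.IsQF) :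
    (l.foldr (· ⊔ ·) ⊥).IsQF := by
  induction l with
  | nil => exact isQF_bot
  | cons φ l ih => exact (h φ (by simp)).sup (ih fun ψ hψ => h ψ (by simp [hψ]))

theorem isQF_foldr_inf {n : ℕ} {l : List (L.BoundedFormula α n)} (h : ∀ φ ∈ l, φ.IsQF) :
    (l.foldr (· ⊓ ·) ⊤).IsQF := by
  induction l with
  | nil => exact IsQF.top
  | cons φ l ih => exact (h φ (by simp)).inf (ih fun ψ hψ => h ψ (by simp [hψ]))

theorem IsQF.iSup [Finite β] {n : ℕ} {f : β → L.BoundedFormula α n} (h : ∀ b, (f b).IsQF) :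
    (BoundedFormula.iSup f).IsQF :=
  isQF_foldr_sup (by simpa using h)

theorem IsQF.iInf [Finite β] {n : ℕ} {f : β → L.BoundedFormula α n} (h : ∀ b, (f b).IsQF) :
    (BoundedFormula.iInf f).IsQF :=
  isQF_foldr_inf (by simpa using h)

theorem IsQF.restrictFreeVar [DecidableEq α] {n : ℕ} {φ : L.BoundedFormula α n} (h : φ.IsQF)
    (f : φ.freeVarFinset → β) : (φ.restrictFreeVar f).IsQF := by
  induction φ with
  | falsum => exact isQF_bot
  | equal t₁ t₂ => exact (IsAtomic.equal _ _).isQF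
  | rel R ts => exact (IsAtomic.rel _ _).isQF
  | imp φ₁ φ₂ ih₁ ih₂ =>
    cases h with
    | of_isAtomic h => cases h
    | imp h₁ h₂ => exact (ih₁ h₁ _).imp (ih₂ h₂ _)
  | all φ _ => exact absurd h (not_all_isQF φ)

theorem IsQF.realize_castLE {m n : ℕ} {φ : L.BoundedFormula α m} (hφ : φ.IsQF) (h : m ≤ n)
    {v : α → M} {xs : Fin n → M} :
    (φ.castLE h).Realize v xs ↔ φ.Realize v (xs ∘ Fin.castLE h) := by
  induction hφ with
  | falsum => exact Iff.rfl
  | of_isAtomic hφ =>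
    cases hφ with
    | equal t₁ t₂ =>
      simp [Term.bdEqual, castLE, BoundedFormula.Realize, Term.realize_relabel, Sum.elim_comp_map]
    | rel R ts =>
      simp [Relations.boundedFormula, castLE, BoundedFormula.Realize, Term.realize_relabel,
        Sum.elim_comp_map]
  | imp _ _ ih₁ ih₂ => simp [castLE, ih₁, ih₂]

end BoundedFormula

def Sentence.IsSigma1 (σ : L.Sentence) : Prop :=
  ∃ (k : ℕ) (χ : L.BoundedFormula Empty k), χ.IsQF ∧ σ = χ.exs

theorem Sentence.IsSigma1.realize_of_embedding {σ : L.Sentence} (hσ : σ.IsSigma1)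
    (f : M ↪[L] N) (h : M ⊨ σ) : N ⊨ σ := by
  obtain ⟨k, χ, hχ, rfl⟩ := hσ
  obtain ⟨xs, hxs⟩ := BoundedFormula.realize_exs.1 h
  refine BoundedFormula.realize_exs.2 ⟨f ∘ xs, ?_⟩
  rw [← hχ.realize_embedding f] at hxs
  rwa [Subsingleton.elim (f ∘ default) default] at hxs

theorem Formula.isSigma1_exClosure [DecidableEq α] {δ : L.Formula α} (hδ : δ.IsQF) :
    δ.exClosure.IsSigma1 := by
  unfold Formula.exClosure Formula.iExs
  exact ⟨_, _, ((hδ.restrictFreeVar id).relabel _).relabel _, rfl⟩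

theorem Formula.realize_exClosure_iff [DecidableEq α] [Nonempty M] {δ : L.Formula α} :
    M ⊨ δ.exClosure ↔ ∃ v : α → M, δ.Realize v := by
  rw [realize_exClosure]
  constructor
  · rintro ⟨v, hv⟩
    refine ⟨Function.extend Subtype.val v fun _ => Classical.arbitrary M, ?_⟩
    exact (BoundedFormula.realize_restrictFreeVar _
      fun a => (Subtype.val_injective.extend_apply _ _ a).symm).1 hv
  · rintro ⟨v, hv⟩
    exact ⟨v ∘ Subtype.val,
      (BoundedFormula.realize_restrictFreeVar (f := id) v fun _ => rfl).2 hv⟩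

theorem Sentence.exists_isSigma1_iff_exists_mem (S : Finset L.Sentence)
    (hS : ∀ σ ∈ S, σ.IsSigma1) : ∃ τ : L.Sentence, τ.IsSigma1 ∧
      ∀ (M : Type*) [L.Structure M] [Nonempty M], M ⊨ τ ↔ ∃ σ ∈ S, M ⊨ σ := by
  choose k χ hχ hσ using fun σ : S => hS σ σ.2
  have hk (σ : S) : k σ ≤ Finset.univ.sup k := Finset.le_sup (Finset.mem_univ σ)
  refine ⟨(BoundedFormula.iSup fun σ => (χ σ).castLE (hk σ)).exs,
    ⟨_, _, BoundedFormula.IsQF.iSup fun σ => (hχ σ).castLE, rfl⟩, fun M _ _ => ?_⟩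
  simp only [Sentence.Realize, BoundedFormula.realize_exs, BoundedFormula.realize_iSup,
    (hχ _).realize_castLE]
  constructor
  · rintro ⟨xs, σ, hxs⟩
    exact ⟨σ, σ.2, hσ σ ▸ BoundedFormula.realize_exs.2 ⟨_, hxs⟩⟩
  · rintro ⟨σ, hσS, hσM⟩
    set s : S := ⟨σ, hσS⟩
    have hsM : Formula.Realize (χ s).exs (default : Empty → M) := hσ s ▸ hσM
    obtain ⟨ys, hys⟩ := BoundedFormula.realize_exs.1 hsM
    obtain ⟨xs, rfl⟩ := (Fin.castLE_injective (hk s)).surjective_comp_right ys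
    exact ⟨xs, s, hys⟩

open BoundedFormula Structure in
def Embedding.ofRealizeQF (g : M → N)
    (hg : ∀ χ : L.Formula M, χ.IsQF → χ.Realize id → χ.Realize g) : M ↪[L] N where
  toFun := g
  inj' a b hab := by
    by_contra hne
    have := hg (Term.equal (var a) (var b)).not (IsAtomic.equal _ _).isQF.not (by simpa using hne)
    simp only [Formula.realize_not, Formula.realize_equal, Term.realize_var] at this
    exact this hab
  map_fun' {n} f x := by
    simpa [Function.comp_def, eq_comm] using
      hg (Term.equal (func f fun i => var (x i)) (var (funMap f x))) (IsAtomic.equal _ _).isQF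
        (by simp)
  map_rel' {n} r x := by
    by_cases hx : RelMap r x
    · have := hg (r.formula fun i => var (x i)) (IsAtomic.rel _ _).isQF (by simpa using hx)
      simp only [Formula.realize_rel, Term.realize_var] at this
      exact iff_of_true this hx
    · have := hg (r.formula fun i => var (x i)).not (IsAtomic.rel _ _).isQF.not
        (by simpa using hx)
      simp only [Formula.realize_not, Formula.realize_rel, Term.realize_var] at this
      exact iff_of_false this hx

variable (L M) in
def qfDiagram : L[[M]].Theory :=
  Formula.equivSentence '' {χ : L.Formula M | χ.IsQF ∧ χ.Realize id}

def Embedding.ofModelsQFDiagram (N : Type*) [L.Structure N] [L[[M]].Structure N]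
    [(L.lhomWithConstants M).IsExpansionOn N] [N ⊨ L.qfDiagram M] : M ↪[L] N :=
  Embedding.ofRealizeQF (fun a => (L.con a : N)) fun χ hχ hχM =>
    (Formula.realize_equivSentence N χ).1
      (Theory.realize_sentence_of_mem (L.qfDiagram M) ⟨χ, ⟨hχ, hχM⟩, rfl⟩)

theorem exists_isQF_of_qfDiagram_models {φ : L.Sentence}
    (h : L.qfDiagram M ⊨ᵇ (L.lhomWithConstants M).onSentence φ) :
    ∃ δ : L.Formula M, δ.IsQF ∧ δ.Realize id ∧
      ∀ (N : Type*) [L.Structure N] [Nonempty N] (w : M → N), δ.Realize w → N ⊨ φ := by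
  classical
  obtain ⟨T, hT, hTφ⟩ := Theory.models_iff_finset_models.1 h
  obtain ⟨S, hS, rfl⟩ := Finset.subset_set_image_iff.1 hT
  refine ⟨Formula.iInf fun χ : S => χ.1, BoundedFormula.IsQF.iInf fun χ => (hS χ.2).1,
    Formula.realize_iInf.2 fun χ => (hS χ.2).2, fun N _ _ w hw => ?_⟩
  let := constantsOn.structure w
  have : N ⊨ (S.image Formula.equivSentence : L[[M]].Theory) := by
    refine (Theory.model_iff _).2 fun σ hσ => ?_
    obtain ⟨χ, hχ, rfl⟩ := Finset.mem_image.1 (Finset.mem_coe.1 hσ)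
    exact (Formula.realize_equivSentence N χ).2 (Formula.realize_iInf.1 hw ⟨χ, hχ⟩)
  exact (LHom.realize_onSentence N _ φ).1 (hTφ.realize_sentence N)

def Sentence.PreservedUnderEmbeddings (φ : L.Sentence) : Prop :=
  ∀ (M N : Type (max u v)) [L.Structure M] [L.Structure N] [Nonempty M],
    (M ↪[L] N) → M ⊨ φ → N ⊨ φ

theorem qfDiagram_models_of_preservedUnderEmbeddings {φ : L.Sentence}
    (hφ : φ.PreservedUnderEmbeddings) (M : Type (max u v)) [L.Structure M] [Nonempty M]
    (hM : M ⊨ φ) : L.qfDiagram M ⊨ᵇ (L.lhomWithConstants M).onSentence φ := by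
  refine Theory.models_sentence_iff.2 fun N => ?_
  let : L.Structure N := (L.lhomWithConstants M).reduct N
  have : (L.lhomWithConstants M).IsExpansionOn N := LHom.isExpansionOn_reduct _ _
  exact (LHom.realize_onSentence N _ φ).2 (hφ M N (Embedding.ofModelsQFDiagram N) hM)

theorem Sentence.PreservedUnderEmbeddings.exists_isSigma1_implicant {φ : L.Sentence}
    (hφ : φ.PreservedUnderEmbeddings) (M : Type (max u v)) [L.Structure M] [Nonempty M]
    (hM : M ⊨ φ) : ∃ σ : L.Sentence, σ.IsSigma1 ∧ M ⊨ σ ∧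
      ∀ (N : Type (max u v)) [L.Structure N] [Nonempty N], N ⊨ σ → N ⊨ φ := by
  classical
  obtain ⟨δ, hδ, hδM, hδφ⟩ :=
    exists_isQF_of_qfDiagram_models (qfDiagram_models_of_preservedUnderEmbeddings hφ M hM)
  refine ⟨δ.exClosure, Formula.isSigma1_exClosure hδ,
    Formula.realize_exClosure_iff.2 ⟨id, hδM⟩, fun N _ _ hN => ?_⟩
  obtain ⟨w, hw⟩ := Formula.realize_exClosure_iff.1 hN
  exact hδφ N w hw

theorem Sentence.PreservedUnderEmbeddings.exists_isSigma1_iff {φ : L.Sentence}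
    (hφ : φ.PreservedUnderEmbeddings) : ∃ τ : L.Sentence, τ.IsSigma1 ∧
      ∀ (M : Type (max u v)) [L.Structure M] [Nonempty M], M ⊨ φ ↔ M ⊨ τ := by
  classical
  let Θ := {σ : L.Sentence | σ.IsSigma1 ∧
    ∀ (N : Type (max u v)) [L.Structure N] [Nonempty N], N ⊨ σ → N ⊨ φ}
  have hΘ : BoundedFormula.not '' Θ ⊨ᵇ φ.not := by
    refine Theory.models_sentence_iff.2 fun M => (Sentence.realize_not M).2 fun hM => ?_
    obtain ⟨σ, hσ, hMσ, hσφ⟩ := hφ.exists_isSigma1_implicant M hM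
    have hMσ' : M ⊨ σ.not :=
      Theory.realize_sentence_of_mem (BoundedFormula.not '' Θ) ⟨σ, ⟨hσ, hσφ⟩, rfl⟩
    exact (Sentence.realize_not M).1 hMσ' hMσ
  obtain ⟨T, hT, hTφ⟩ := Theory.models_iff_finset_models.1 hΘ
  obtain ⟨S, hSΘ, rfl⟩ := Finset.subset_set_image_iff.1 hT
  obtain ⟨τ, hτ, hτS⟩ := Sentence.exists_isSigma1_iff_exists_mem S fun σ hσ => (hSΘ hσ).1
  refine ⟨τ, hτ, fun M _ _ => ?_⟩
  rw [hτS M]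
  refine ⟨fun hM => ?_, fun ⟨σ, hσ, hMσ⟩ => (hSΘ hσ).2 M hMσ⟩
  by_contra! h
  have : M ⊨ (S.image BoundedFormula.not : L.Theory) := by
    refine (Theory.model_iff _).2 fun σ hσ => ?_
    obtain ⟨σ, hσS, rfl⟩ := Finset.mem_image.1 (Finset.mem_coe.1 hσ)
    exact (Sentence.realize_not M).2 (h σ hσS)
  exact (Sentence.realize_not M).1 (hTφ.realize_sentence M) hM

end FirstOrder.Language

theorem theta_self_expressible_iff_existential
    {L : FirstOrder.Language.{u, v}} (φ : L.Sentence) :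
    (∀ (M : Type (max u v)) [L.Structure M] [Nonempty M],
        (∃ S : L.Substructure M, Nonempty S ∧ S ⊨ φ) ↔ M ⊨ φ) ↔
      (∃ (k : ℕ) (ψ : L.BoundedFormula Empty k), ψ.IsQF ∧
        ∀ (M : Type (max u v)) [L.Structure M] [Nonempty M],
          M ⊨ φ ↔ M ⊨ ψ.exs) := by
  constructor
  · intro hθ
    have hφ : φ.PreservedUnderEmbeddings := fun M N _ _ _ f hM =>
      let m := Classical.arbitrary M
      have : Nonempty N := ⟨f m⟩
      (hθ N).1 ⟨f.toHom.range, ⟨⟨f m, Hom.mem_range_self _ m⟩⟩,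
        (StrongHomClass.realize_sentence f.equivRange φ).1 hM⟩
    obtain ⟨τ, ⟨k, ψ, hψ, rfl⟩, hφψ⟩ := hφ.exists_isSigma1_iff
    exact ⟨k, ψ, hψ, hφψ⟩
  · rintro ⟨k, ψ, hψ, hφψ⟩ M _ _
    have hσ : Sentence.IsSigma1 ψ.exs := ⟨k, ψ, hψ, rfl⟩
    constructor
    · rintro ⟨S, hS, hSφ⟩
      exact (hφψ M).2 (hσ.realize_of_embedding S.subtype ((hφψ S).1 hSφ))
    · intro hM
      refine ⟨⊤, ⟨⟨Classical.arbitrary M, Substructure.mem_top _⟩⟩, ?_⟩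
      exact (StrongHomClass.realize_sentence Substructure.topEquiv φ).2 hM
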